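/- In the preferential attachment multigraph growth model with parameter θ > 0 on n vertices started from the empty graph, for every m ≥ 0 the degree sequence D*(m) = (D*_1(m),…,D*_n(m)) satisfies ℙ[D*(m) = d] = ((2m)! / (nθ)^{(2m)}) · Π_{i=1}^n θ^{(d_i)} / d_i! for every degree sequence d with Σ_i d_i = 2m, where x^{(k)} = x(x+1)⋯(x+k-1) is the rising factorial. -/

import Mathlib

/-!
The two ends of a new edge are two successive draws from a Pólya urn: with `2m` half-edges the
first end goes to `i` with probability `(dᵢ + θ)/(2m + nθ)`, the second to `j` with probability
`(dⱼ + [i = j] + θ)/(2m + 1 + nθ)`, and adding the two orders of an unordered pair gives the edge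
probability. So the degree sequence after `m` steps is the colour count of the urn after `2m`
draws. The Dirichlet-multinomial law `w_K` survives one draw because
`w_K(c - eᵢ) · ℙ(draw i) = w_{K+1}(c) · cᵢ/(K + 1)` and `∑ cᵢ = K + 1`.
-/

open Finset Nat

/-- Rising factorial `x^{(k)} = x (x+1) ⋯ (x+k-1)` for real `x`. -/
noncomputable def riseR (x : ℝ) (k : ℕ) : ℝ := ∏ i ∈ Finset.range k, (x + i)

/-- Degree of vertex `i` in the multigraph with adjacency matrix `G`
(a loop at `i` contributes `2` via the diagonal entry). -/
def deg {n : ℕ} (G : Fin n → Fin n → ℕ) (i : Fin n) : ℕ := ∑ j, G i j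

/-- Add an edge between `i` and `j` (a loop if `i = j`, raising the diagonal
entry by `2`). -/
def addEdge {n : ℕ} (G : Fin n → Fin n → ℕ) (i j : Fin n) : Fin n → Fin n → ℕ :=
  fun p q => G p q + (if (p = i ∧ q = j) ∨ (p = j ∧ q = i) then 1 else 0) +
    (if i = j ∧ p = i ∧ q = i then 1 else 0)

/-- Probability of attaching the new edge at the pair `(i,j)` when the current
graph `G` has `2m` half-edges, in the preferential attachment growth model. -/
noncomputable def stepProb {n : ℕ} (θ : ℝ) (m : ℕ) (G : Fin n → Fin n → ℕ)
    (i j : Fin n) : ℝ :=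
  if i = j then
    ((deg G i : ℝ) + θ) * ((deg G i : ℝ) + θ + 1) /
      ((2 * m + n * θ) * (2 * m + n * θ + 1))
  else
    2 * ((deg G i : ℝ) + θ) * ((deg G j : ℝ) + θ) /
      ((2 * m + n * θ) * (2 * m + n * θ + 1))

/-- `P` is the law of the preferential attachment multigraph growth model:
`P m G` is the probability that the graph after `m` steps equals `G`. -/
def IsGrowthLaw {n : ℕ} (θ : ℝ) (P : ℕ → (Fin n → Fin n → ℕ) → ℝ) : Prop :=
  (∀ G, P 0 G = if G = fun _ _ => 0 then 1 else 0) ∧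
  ∀ m G', P (m + 1) G' =
    ∑' G : Fin n → Fin n → ℕ, P m G *
      ∑ i, ∑ j, (if i ≤ j ∧ G' = addEdge G i j then stepProb θ m G i j else 0)

lemma riseR_succ (x : ℝ) (k : ℕ) : riseR x (k + 1) = riseR x k * (x + k) :=
  Finset.prod_range_succ _ _

lemma riseR_div_factorial_succ (θ : ℝ) (k : ℕ) :
    riseR θ (k + 1) / ((k + 1)! : ℝ) = riseR θ k / (k ! : ℝ) * ((θ + k) / (k + 1)) := by
  rw [riseR_succ, Nat.factorial_succ, Nat.cast_mul, Nat.cast_succ]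
  simp only [div_eq_mul_inv, mul_inv]
  ring

theorem Finset.sum_sum_ite_le {ι M : Type*} [LinearOrder ι] [Fintype ι] [AddCommMonoid M]
    (g : ι → ι → M) :
    ∑ i, ∑ j, (if i ≤ j then (if i = j then g i i else g i j + g j i) else 0) =
      ∑ i, ∑ j, g i j := by
  calc ∑ i, ∑ j, (if i ≤ j then (if i = j then g i i else g i j + g j i) else 0)
      = ∑ i, ∑ j, ((if i ≤ j then g i j else 0) + if i < j then g j i else 0) := by
        refine sum_congr rfl fun i _ => sum_congr rfl fun j _ => ?_
        rcases lt_trichotomy i j with h | rfl | h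
        · simp [h.le, h, h.ne]
        · simp
        · simp [h.not_gt, h.not_ge]
    _ = ∑ i, ∑ j, ((if i ≤ j then g i j else 0) + if j < i then g i j else 0) := by
        simp only [sum_add_distrib]
        rw [sum_comm (f := fun i j => if i < j then g j i else 0)]
    _ = ∑ i, ∑ j, g i j := by
        refine sum_congr rfl fun i _ => sum_congr rfl fun j _ => ?_
        rcases le_or_gt i j with h | h
        · simp [h, h.not_gt]
        · simp [h, h.not_ge]

section Graph

variable {n : ℕ}

lemma deg_addEdge (G : Fin n → Fin n → ℕ) (i j : Fin n) :
    deg (addEdge G i j) = deg G + Pi.single i 1 + Pi.single j 1 := by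
  ext p
  simp only [deg, addEdge, Finset.sum_add_distrib, Pi.add_apply, Pi.single_apply]
  rcases eq_or_ne p i with rfl | hpi <;> rcases eq_or_ne p j with rfl | hpj
  · simp
  · simp [hpj]
  · simp [hpi, hpi.symm]
  · simp [hpi, hpj]

lemma addEdge_comm (G : Fin n → Fin n → ℕ) (i j : Fin n) : addEdge G i j = addEdge G j i := by
  ext p q
  simp only [addEdge]
  grind

noncomputable def reachable (n : ℕ) : ℕ → Finset (Fin n → Fin n → ℕ)
  | 0 => {fun _ _ => 0}
  | m + 1 => (reachable n m ×ˢ Finset.univ).image fun x : _ × Fin n × Fin n =>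
      addEdge x.1 x.2.1 x.2.2

lemma addEdge_mem_reachable {G : Fin n → Fin n → ℕ} {m : ℕ} (h : G ∈ reachable n m)
    (i j : Fin n) : addEdge G i j ∈ reachable n (m + 1) :=
  Finset.mem_image.2 ⟨(G, i, j), by simp [h], rfl⟩

end Graph

section Urn

variable {n : ℕ}

noncomputable def urnDraw (θ : ℝ) (K : ℕ) (e : Fin n → ℕ) (i : Fin n) : ℝ :=
  ((e i : ℝ) + θ) / (K + n * θ)

noncomputable def edgeDraw (θ : ℝ) (m : ℕ) (e : Fin n → ℕ) (i j : Fin n) : ℝ :=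
  urnDraw θ (2 * m) e i * urnDraw θ (2 * m + 1) (e + Pi.single i 1) j

lemma stepProb_eq_edgeDraw (θ : ℝ) (m : ℕ) (G : Fin n → Fin n → ℕ) (i j : Fin n) :
    stepProb θ m G i j = if i = j then edgeDraw θ m (deg G) i i
      else edgeDraw θ m (deg G) i j + edgeDraw θ m (deg G) j i := by
  unfold stepProb edgeDraw urnDraw
  split_ifs with hij
  · subst hij
    simp only [Pi.add_apply, Pi.single_eq_same, div_eq_mul_inv, mul_inv]
    push_cast
    ring
  · simp only [Pi.add_apply, Pi.single_eq_of_ne hij, Pi.single_eq_of_ne (Ne.symm hij),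
      div_eq_mul_inv, mul_inv]
    push_cast
    ring

open Classical in
/-- The law of the colour counts after one more draw from a Pólya urn holding `K` balls, given
their law `L` before the draw. -/
noncomputable def urnStep (θ : ℝ) (K : ℕ) (L : (Fin n → ℕ) → ℝ) (c : Fin n → ℕ) : ℝ :=
  ∑ i, if Pi.single i 1 ≤ c then
    L (c - Pi.single i 1) * urnDraw θ K (c - Pi.single i 1) i else 0

lemma urnStep_sum_mul_ite {X : Type*} (θ : ℝ) (K : ℕ) (s : Finset X) (w : X → ℝ)
    (f : X → Fin n → ℕ) (c : Fin n → ℕ) :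
    urnStep θ K (fun e => ∑ x ∈ s, w x * if f x = e then 1 else 0) c =
      ∑ x ∈ s, w x * ∑ i, if f x + Pi.single i 1 = c then urnDraw θ K (f x) i else 0 := by
  simp only [urnStep, Finset.mul_sum]
  rw [Finset.sum_comm]
  refine Finset.sum_congr rfl fun i _ => ?_
  split_ifs with hi
  · rw [Finset.sum_mul]
    refine Finset.sum_congr rfl fun x _ => ?_
    by_cases hx : f x + Pi.single i 1 = c
    · rw [if_pos ((eq_tsub_iff_add_eq_of_le hi).2 hx), if_pos hx, ← hx, add_tsub_cancel_right]
      ring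
    · rw [if_neg (mt (eq_tsub_iff_add_eq_of_le hi).1 hx), if_neg hx]
      ring
  · refine (Finset.sum_eq_zero fun x _ => ?_).symm
    rw [if_neg fun (hx : f x + _ = c) => hi (hx ▸ le_add_self), mul_zero]

noncomputable def dirichletMultinomial (θ : ℝ) (K : ℕ) (d : Fin n → ℕ) : ℝ :=
  ((K ! : ℝ) / riseR (n * θ) K) * ∏ i, riseR θ (d i) / ((d i)! : ℝ)

lemma dirichletMultinomial_mul_urnDraw (θ : ℝ) (K : ℕ) (e : Fin n → ℕ) (i : Fin n) :
    dirichletMultinomial θ K e * urnDraw θ K e i =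
      dirichletMultinomial θ (K + 1) (e + Pi.single i 1) * ((e i + 1) / (K + 1)) := by
  have hprod : ∏ p, riseR θ ((e + Pi.single i 1 : Fin n → ℕ) p) /
        (((e + Pi.single i 1 : Fin n → ℕ) p)! : ℝ) =
      (∏ p, riseR θ (e p) / ((e p)! : ℝ)) * ((θ + e i) / (e i + 1)) := by
    rw [Fintype.prod_eq_mul_prod_compl i, Fintype.prod_eq_mul_prod_compl i,
      Finset.prod_congr rfl fun p hp => by
        rw [Pi.add_apply, Pi.single_eq_of_ne (by simpa using hp), add_zero]]
    simp only [Pi.add_apply, Pi.single_eq_same, riseR_div_factorial_succ]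
    ring
  unfold dirichletMultinomial urnDraw
  rw [hprod, riseR_succ, Nat.factorial_succ, Nat.cast_mul, Nat.cast_succ]
  have hK : (K : ℝ) + 1 ≠ 0 := K.cast_add_one_ne_zero
  have he : (e i : ℝ) + 1 ≠ 0 := (e i).cast_add_one_ne_zero
  field_simp
  ring

open Classical in
lemma urnStep_dirichletMultinomial {θ : ℝ} {K : ℕ} {L : (Fin n → ℕ) → ℝ}
    (hL : ∀ e, ∑ i, e i = K → L e = dirichletMultinomial θ K e) {c : Fin n → ℕ}
    (hc : ∑ i, c i = K + 1) :
    urnStep θ K L c = dirichletMultinomial θ (K + 1) c := by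
  have hterm : ∀ i, (if Pi.single i 1 ≤ c then
      L (c - Pi.single i 1) * urnDraw θ K (c - Pi.single i 1) i else 0) =
        dirichletMultinomial θ (K + 1) c * (c i / (K + 1)) := by
    intro i
    split_ifs with hi
    · have hci : 1 ≤ c i := by simpa using hi i
      have hsum : ∑ p, (c - Pi.single i 1 : Fin n → ℕ) p = K := by
        have := congrArg (fun f : Fin n → ℕ => ∑ p, f p) (tsub_add_cancel_of_le hi)
        simp only [Pi.add_apply, Finset.sum_add_distrib, Finset.sum_pi_single', Finset.mem_univ,
          if_true] at this
        omega
      rw [hL _ hsum, dirichletMultinomial_mul_urnDraw, tsub_add_cancel_of_le hi, Pi.sub_apply,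
        Pi.single_eq_same, Nat.cast_sub hci, Nat.cast_one, sub_add_cancel]
    · have hci : c i = 0 := by
        by_contra hci
        refine hi fun p => ?_
        rcases eq_or_ne p i with rfl | hpi
        · simpa [Nat.one_le_iff_ne_zero] using hci
        · simp [hpi]
      rw [hci, Nat.cast_zero, zero_div, mul_zero]
  have hc' : (∑ i, c i : ℝ) = K + 1 := by exact_mod_cast hc
  rw [urnStep, Finset.sum_congr rfl fun i _ => hterm i, ← Finset.mul_sum, ← Finset.sum_div, hc',
    div_self K.cast_add_one_ne_zero, mul_one]

end Urn

noncomputable def degLaw {n : ℕ} (P : ℕ → (Fin n → Fin n → ℕ) → ℝ) (m : ℕ) (d : Fin n → ℕ) :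
    ℝ :=
  ∑ G ∈ reachable n m, P m G * if deg G = d then 1 else 0

namespace IsGrowthLaw

variable {n : ℕ} {θ : ℝ} {P : ℕ → (Fin n → Fin n → ℕ) → ℝ}

lemma eq_zero_of_notMem_reachable (hP : IsGrowthLaw θ P) :
    ∀ {m G}, G ∉ reachable n m → P m G = 0
  | 0, G, hG => by
    rw [hP.1, if_neg (by simpa [reachable] using hG)]
  | m + 1, G', hG' => by
    rw [hP.2, tsum_eq_sum (s := ∅) fun G _ => ?_, Finset.sum_empty]
    by_cases hG : G ∈ reachable n m
    · refine mul_eq_zero_of_right _ (Finset.sum_eq_zero fun i _ => ?_)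
      refine Finset.sum_eq_zero fun j _ => if_neg fun ⟨_, h⟩ => hG' ?_
      exact h ▸ addEdge_mem_reachable hG i j
    · rw [hP.eq_zero_of_notMem_reachable hG, zero_mul]

lemma tsum_mul_eq_sum (hP : IsGrowthLaw θ P) (m : ℕ) (F : (Fin n → Fin n → ℕ) → ℝ) :
    ∑' G, P m G * F G = ∑ G ∈ reachable n m, P m G * F G :=
  tsum_eq_sum fun _ hG => by rw [hP.eq_zero_of_notMem_reachable hG, zero_mul]

lemma sum_succ_mul (hP : IsGrowthLaw θ P) (m : ℕ) (F : (Fin n → Fin n → ℕ) → ℝ) :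
    ∑ G' ∈ reachable n (m + 1), P (m + 1) G' * F G' =
      ∑ G ∈ reachable n m, P m G * ∑ i, ∑ j, edgeDraw θ m (deg G) i j * F (addEdge G i j) := by
  have hstep : ∀ G ∈ reachable n m,
      ∑ G' ∈ reachable n (m + 1),
          (∑ i, ∑ j, if i ≤ j ∧ G' = addEdge G i j then stepProb θ m G i j else 0) * F G' =
        ∑ i, ∑ j, if i ≤ j then stepProb θ m G i j * F (addEdge G i j) else 0 := by
    intro G hG
    simp only [Finset.sum_mul, ite_mul, zero_mul, ite_and]
    rw [Finset.sum_comm]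
    refine Finset.sum_congr rfl fun i _ => ?_
    rw [Finset.sum_comm]
    refine Finset.sum_congr rfl fun j _ => ?_
    split_ifs
    · rw [Finset.sum_ite_eq' _ _ (fun G' => stepProb θ m G i j * F G'),
        if_pos (addEdge_mem_reachable hG i j)]
    · exact Finset.sum_const_zero
  simp_rw [hP.2, hP.tsum_mul_eq_sum, Finset.sum_mul, mul_assoc]
  rw [Finset.sum_comm]
  refine Finset.sum_congr rfl fun G hG => ?_
  rw [← Finset.mul_sum, hstep G hG,
    ← Finset.sum_sum_ite_le fun i j => edgeDraw θ m (deg G) i j * F (addEdge G i j)]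
  refine congrArg _ (Finset.sum_congr rfl fun i _ => Finset.sum_congr rfl fun j _ => ?_)
  rw [stepProb_eq_edgeDraw]
  split_ifs with _ hij
  · rw [hij]
  · rw [add_mul, addEdge_comm G j i]
  · rfl

lemma degLaw_succ (hP : IsGrowthLaw θ P) (m : ℕ) (d : Fin n → ℕ) :
    degLaw P (m + 1) d = urnStep θ (2 * m + 1) (urnStep θ (2 * m) (degLaw P m)) d := by
  have hfirst : urnStep θ (2 * m) (degLaw P m) = fun c =>
      ∑ x ∈ reachable n m ×ˢ Finset.univ, P m x.1 * urnDraw θ (2 * m) (deg x.1) x.2 *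
        if deg x.1 + Pi.single x.2 1 = c then 1 else 0 := by
    ext c
    unfold degLaw
    rw [urnStep_sum_mul_ite, Finset.sum_product]
    simp only [Finset.mul_sum, mul_ite, mul_one, mul_zero]
  rw [hfirst, urnStep_sum_mul_ite, Finset.sum_product, degLaw, hP.sum_succ_mul]
  simp only [deg_addEdge, edgeDraw, Finset.mul_sum, mul_ite, mul_one, mul_zero, mul_assoc]

lemma degLaw_zero (hP : IsGrowthLaw θ P) (d : Fin n → ℕ) :
    degLaw P 0 d = if d = 0 then 1 else 0 := by
  simp only [degLaw, reachable, Finset.sum_singleton, hP.1, if_true, one_mul]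
  refine if_congr ⟨fun h => ?_, fun h => ?_⟩ rfl rfl
  · rw [← h]; ext i; simp [deg]
  · rw [h]; ext i; simp [deg]

lemma degLaw_eq_dirichletMultinomial (hP : IsGrowthLaw θ P) :
    ∀ m (d : Fin n → ℕ), ∑ i, d i = 2 * m → degLaw P m d = dirichletMultinomial θ (2 * m) d
  | 0, d, hd => by
    have hd0 : d = 0 := funext fun i => Finset.sum_eq_zero_iff.1 hd i (Finset.mem_univ i)
    simp [hP.degLaw_zero, hd0, dirichletMultinomial, riseR]
  | m + 1, d, hd => by
    rw [hP.degLaw_succ, show 2 * (m + 1) = 2 * m + 1 + 1 by ring]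
    exact urnStep_dirichletMultinomial
      (fun c hc => urnStep_dirichletMultinomial (hP.degLaw_eq_dirichletMultinomial m) hc) hd

end IsGrowthLaw

theorem stmt_9 {n : ℕ} (θ : ℝ)
    (P : ℕ → (Fin n → Fin n → ℕ) → ℝ) (hP : IsGrowthLaw θ P)
    (m : ℕ) (d : Fin n → ℕ) (hd : ∑ i, d i = 2 * m) :
    (∑' G : Fin n → Fin n → ℕ, if ∀ i, deg G i = d i then P m G else 0) =
      (((2 * m)! : ℝ) / riseR (n * θ) (2 * m)) * ∏ i, riseR θ (d i) / ((d i)! : ℝ) := by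
  rw [← dirichletMultinomial, ← hP.degLaw_eq_dirichletMultinomial m d hd, degLaw,
    ← hP.tsum_mul_eq_sum]
  simp only [mul_boole, funext_iff]
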